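/- Let M be a homogeneous separable metric space which isometrically embeds every finite metric space F with dist(F) ⊆ dist(M). Then the metric completion of M is homogeneous. -/

import Mathlib

/-- The set of distances realized in a metric space. -/
def distSet (X : Type*) [MetricSpace X] : Set ℝ :=
  {r : ℝ | ∃ x y : X, dist x y = r}

/-- A metric space is homogeneous if every isometry from a finite subset into the
space extends to a bijective self-isometry. -/
def IsHomogeneous (X : Type*) [MetricSpace X] : Prop :=
  ∀ F : Set X, F.Finite →
    ∀ f : F → X, (∀ x y : F, dist (f x) (f y) = dist (x : X) (y : X)) →
      ∃ g : X ≃ᵢ X, ∀ x : F, g (x : X) = f x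

/-- A metric space is universal if it is homogeneous and embeds isometrically every
finite metric space whose distances lie in its distance set. -/
def IsUniversal (X : Type*) [MetricSpace X] : Prop :=
  IsHomogeneous X ∧
    ∀ (F : Type) [MetricSpace F] [Finite F], distSet F ⊆ distSet X →
      ∃ f : F → X, ∀ a b : F, dist (f a) (f b) = dist a b

/-- An Urysohn metric space: homogeneous, separable, complete, and embedding every
separable metric space whose distances lie in its distance set. -/
def IsUrysohn (X : Type*) [MetricSpace X] : Prop :=
  IsHomogeneous X ∧ TopologicalSpace.SeparableSpace X ∧ CompleteSpace X ∧
    ∀ (N : Type) [MetricSpace N] [TopologicalSpace.SeparableSpace N],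
      distSet N ⊆ distSet X →
        ∃ f : N → X, ∀ a b : N, dist (f a) (f b) = dist a b

/-- The triple `(a, b, c)` of nonnegative reals is metric: `|a - b| ≤ c ≤ a + b`. -/
def MetricTriple (a b c : ℝ) : Prop := |a - b| ≤ c ∧ c ≤ a + b

/-- `x ⤳ (a, b, c, d)`: the triples `(x,a,b)` and `(x,c,d)` are metric and
`a ≥ max {b, c, d}`. -/
def Leads (x a b c d : ℝ) : Prop :=
  MetricTriple x a b ∧ MetricTriple x c d ∧ b ≤ a ∧ c ≤ a ∧ d ≤ a

/-- The 4-values condition. -/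
def FourValues (R : Set ℝ) : Prop :=
  ∀ a b c d, a ∈ R → b ∈ R → c ∈ R → d ∈ R →
    (∃ x ∈ R, Leads x a b c d) → ∃ y ∈ R, Leads y a d c b

/-- `0` is a limit point of `R ⊆ [0, ∞)`. -/
def ZeroLimit (R : Set ℝ) : Prop := ∀ ε > 0, ∃ r ∈ R, 0 < r ∧ r < ε

/-- `d` is a metric on the type `α`. -/
def IsMetricOn {α : Type*} (d : α → α → ℝ) : Prop :=
  (∀ x, d x x = 0) ∧ (∀ x y, d x y = d y x) ∧
    (∀ x y z, d x z ≤ d x y + d y z) ∧ ∀ x y, d x y = 0 → x = y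

/-- A restricted type function of the metric space `X`: a positive real valued function on a
finite subset of `X`, compatible with the metric, with values in the distance set of `X`. -/
def IsRestrictedType (X : Type*) [MetricSpace X] (F : Set X) (t : F → ℝ) : Prop :=
  F.Finite ∧ (∀ x, 0 < t x) ∧
    (∀ x y : F, |t x - t y| ≤ dist (x : X) (y : X) ∧ dist (x : X) (y : X) ≤ t x + t y) ∧
    ∀ x, t x ∈ distSet X

/-- A Katětov function of the metric space `X`: a positive real valued function on a finite
subset of `X` whose one-point extension `Sp(k)` is isometric to a subspace of `X`. -/
def IsKatetov (X : Type*) [MetricSpace X] (F : Set X) (k : F → ℝ) : Prop :=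
  F.Finite ∧ (∀ x, 0 < k x) ∧
    ∃ (g : F → X) (p : X),
      (∀ x y : F, dist (g x) (g y) = dist (x : X) (y : X)) ∧ ∀ x : F, dist p (g x) = k x

/-- `p` realizes the type function `t` in `X`. -/
def Realizes {X : Type*} [MetricSpace X] (F : Set X) (t : F → ℝ) (p : X) : Prop :=
  ∀ x : F, dist p (x : X) = t x

/-!
If `0` is not a limit of distances, `M` is uniformly discrete, hence complete and equal to its
completion `X`. Otherwise homogeneity and the embedding property make `M` realize every Katětov
function on a finite set with values in `dist(M)`. Given a finite partial isometry `a ↦ c` of `X`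
and a point `b`, realizing small distances `ρ i ∈ dist(M)` one point at a time produces an exact
copy in `M` of an approximation of `a`, lying near `c`; homogeneity of `M` then carries along an
approximation of `b`. Repeating this with corrections of size `ε n ∈ dist(M)`, `ε (n+1) ≤ ε n / 2`,
gives a Cauchy sequence whose limit `q` satisfies `d(q, c i) = d(b, a i)`. This one-point
extension property makes the complete separable space `X` homogeneous by a back-and-forth along a
dense sequence.
-/

open Filter Topology Function UniformSpace

section General

variable {X Y : Type*} [MetricSpace X] [MetricSpace Y]

lemma Finite.exists_pos_forall_le {κ : Type*} [Finite κ] {f : κ → ℝ} (hf : ∀ k, 0 < f k) :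
    ∃ μ > 0, ∀ k, μ ≤ f k := by
  cases isEmpty_or_nonempty κ
  · exact ⟨1, one_pos, isEmptyElim⟩
  · obtain ⟨k, hk⟩ := Finite.exists_min f
    exact ⟨f k, hf k, hk⟩

lemma Isometry.exists_isometryEquiv_of_denseRange [CompleteSpace X] {f : X → Y}
    (hf : Isometry f) (hd : DenseRange f) : ∃ e : X ≃ᵢ Y, ⇑e = f := by
  have hsurj : Surjective f := by
    rw [← Set.range_eq_univ, ← hd.closure_range,
      hf.isUniformInducing.isComplete_range.isClosed.closure_eq]
  exact ⟨{ toEquiv := Equiv.ofBijective f ⟨hf.injective, hsurj⟩, isometry_toFun := hf }, rfl⟩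

theorem exists_tendsto_of_forall_exists_half [CompleteSpace X] (P : ℝ → X → Prop) {ε₀ : ℝ}
    {q₀ : X} (h₀ : P ε₀ q₀)
    (hstep : ∀ ε q, P ε q → ∃ ε' q', P ε' q' ∧ ε' ≤ ε / 2 ∧ dist q' q ≤ 2 * ε) :
    ∃ (ε : ℕ → ℝ) (q : ℕ → X) (x : X),
      (∀ n, P (ε n) (q n) ∧ ε n ≤ ε₀ / 2 ^ n) ∧ Tendsto q atTop (𝓝 x) := by
  choose! E Q hEQ using hstep
  let s : ℕ → ℝ × X := fun n => (fun p => (E p.1 p.2, Q p.1 p.2))^[n] (ε₀, q₀)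
  have hs : ∀ n, s (n + 1) = (E (s n).1 (s n).2, Q (s n).1 (s n).2) := fun n =>
    iterate_succ_apply' _ n _
  have hP : ∀ n, P (s n).1 (s n).2 ∧ (s n).1 ≤ ε₀ / 2 ^ n := by
    intro n
    induction n with
    | zero => simpa [s] using h₀
    | succ n ih =>
      obtain ⟨hPn, hεn, -⟩ := hEQ _ _ ih.1
      rw [hs, pow_succ, ← div_div]
      exact ⟨hPn, hεn.trans (by linarith [ih.2])⟩
  have hcauchy : CauchySeq fun n => (s n).2 := by
    refine cauchySeq_of_le_geometric_two (C := 4 * ε₀) fun n => ?_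
    rw [dist_comm, hs]
    calc dist (Q (s n).1 (s n).2) (s n).2 ≤ 2 * (s n).1 := (hEQ _ _ (hP n).1).2.2
      _ ≤ 2 * (ε₀ / 2 ^ n) := by linarith [(hP n).2]
      _ = 4 * ε₀ / 2 / 2 ^ n := by ring
  obtain ⟨x, hx⟩ := cauchySeq_tendsto_of_complete hcauchy
  exact ⟨fun n => (s n).1, fun n => (s n).2, x, hP, hx⟩

end General

section IsometricRel

variable {X Y : Type*} [MetricSpace X] [MetricSpace Y]

/-- Partial isometries of `X`, encoded by their graphs. -/
def IsIsometricRel (s : Set (X × X)) : Prop :=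
  ∀ p ∈ s, ∀ q ∈ s, dist p.1 q.1 = dist p.2 q.2

namespace IsIsometricRel

variable {s : Set (X × X)}

lemma preimage_swap (hs : IsIsometricRel s) : IsIsometricRel (Prod.swap ⁻¹' s) :=
  fun _ hp _ hq => (hs _ hp _ hq).symm

lemma insert (hs : IsIsometricRel s) {b q : X} (h : ∀ p ∈ s, dist b p.1 = dist q p.2) :
    IsIsometricRel (insert (b, q) s) := by
  rintro p (rfl | hp) p' (rfl | hp')
  · simp
  · exact h p' hp'
  · rw [dist_comm, h p hp, dist_comm]
  · exact hs p hp p' hp'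

lemma iUnion {ι : Type*} {s : ι → Set (X × X)} (hdir : Directed (· ⊆ ·) s)
    (hs : ∀ i, IsIsometricRel (s i)) : IsIsometricRel (⋃ i, s i) := by
  simp only [IsIsometricRel, Set.mem_iUnion]
  rintro p ⟨i, hp⟩ q ⟨j, hq⟩
  obtain ⟨k, hik, hjk⟩ := hdir i j
  exact hs k p (hik hp) q (hjk hq)

lemma closure (hs : IsIsometricRel s) : IsIsometricRel (closure s) := by
  let T : Set ((X × X) × (X × X)) := {pq | dist pq.1.1 pq.2.1 = dist pq.1.2 pq.2.2}
  have hT : IsClosed T := isClosed_eq (by fun_prop) (by fun_prop)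
  have hsub : _root_.closure s ×ˢ _root_.closure s ⊆ T := by
    rw [← closure_prod_eq]
    exact hT.closure_subset_iff.2 fun pq hpq => hs _ hpq.1 _ hpq.2
  exact fun p hp q hq => hsub (a := (p, q)) ⟨hp, hq⟩

lemma injective_fst (hs : IsIsometricRel s) : Injective fun p : s => p.1.1 := by
  intro p q hpq
  have h2 : p.1.2 = q.1.2 := dist_eq_zero.1 (by rw [← hs _ p.2 _ q.2]; exact dist_eq_zero.2 hpq)
  exact Subtype.ext (Prod.ext hpq h2)

/-- The closure of the relation is the graph of an isometry from its domain onto its range, and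
both are complete; so dense domain and range make it a surjective isometry of `X`. -/
theorem exists_isometryEquiv [CompleteSpace X] (hs : IsIsometricRel s)
    (h₁ : Dense (Prod.fst '' s)) (h₂ : Dense (Prod.snd '' s)) :
    ∃ g : X ≃ᵢ X, ∀ p ∈ s, g p.1 = p.2 := by
  have hR := hs.closure
  have : CompleteSpace (_root_.closure s) := isClosed_closure.completeSpace_coe
  have hdist : ∀ p q : _root_.closure s, dist p q = dist p.1.1 q.1.1 := fun p q => by
    rw [Subtype.dist_eq, Prod.dist_eq, hR _ p.2 _ q.2, max_self]
  have hdense : ∀ π : X × X → X, Dense (π '' s) → DenseRange fun p : _root_.closure s => π p.1 :=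
    fun π hπ => hπ.mono <| by rintro _ ⟨p, hp, rfl⟩; exact ⟨⟨p, subset_closure hp⟩, rfl⟩
  obtain ⟨e₁, he₁⟩ := Isometry.exists_isometryEquiv_of_denseRange
    (Isometry.of_dist_eq fun p q => (hdist p q).symm) (hdense _ h₁)
  obtain ⟨e₂, he₂⟩ := Isometry.exists_isometryEquiv_of_denseRange
    (Isometry.of_dist_eq fun p q => by rw [hdist, hR _ p.2 _ q.2]) (hdense _ h₂)
  refine ⟨e₁.symm.trans e₂, fun p hp => ?_⟩
  have : e₁.symm p.1 = ⟨p, subset_closure hp⟩ := e₁.symm_apply_eq.2 (by simp [he₁])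
  simp [this, he₂]

end IsIsometricRel

theorem IsHomogeneous.of_exists_insert [CompleteSpace X] [TopologicalSpace.SeparableSpace X]
    (hext : ∀ s : Set (X × X), s.Finite → IsIsometricRel s →
      ∀ b, ∃ q, IsIsometricRel (insert (b, q) s)) :
    IsHomogeneous X := by
  intro F hF f hf
  cases isEmpty_or_nonempty X
  · exact ⟨IsometryEquiv.refl X, fun x => isEmptyElim (x : X)⟩
  obtain ⟨D, hD⟩ := TopologicalSpace.exists_dense_seq X
  have hext' : ∀ s : Set (X × X), s.Finite → IsIsometricRel s →
      ∀ b, ∃ q, IsIsometricRel (insert (q, b) s) := by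
    intro s hs hiso b
    obtain ⟨q, hq⟩ := hext _ (hs.preimage Prod.swap_injective.injOn) hiso.preimage_swap b
    refine ⟨q, ?_⟩
    convert hq.preimage_swap using 1
    ext ⟨x, y⟩
    simp [and_comm]
  choose! fwd hfwd using hext
  choose! bwd hbwd using hext'
  let grow (n : ℕ) (s : Set (X × X)) : Set (X × X) :=
    insert (bwd (insert (D n, fwd s (D n)) s) (D n), D n) (insert (D n, fwd s (D n)) s)
  let seq (n : ℕ) : Set (X × X) := Nat.rec (Set.range fun x : F => ((x : X), f x)) grow n
  have hseq : ∀ n, (seq n).Finite ∧ IsIsometricRel (seq n) := by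
    intro n
    induction n with
    | zero =>
      have := hF.to_subtype
      exact ⟨Set.finite_range _, by rintro _ ⟨x, rfl⟩ _ ⟨y, rfl⟩; exact (hf x y).symm⟩
    | succ n ih =>
      have h₁ := hfwd _ ih.1 ih.2 (D n)
      exact ⟨(ih.1.insert _).insert _, hbwd _ (ih.1.insert _) h₁ (D n)⟩
  have hmono : Monotone seq :=
    monotone_nat_of_le_succ fun n => (Set.subset_insert _ _).trans (Set.subset_insert _ _)
  have hmem : ∀ n, (D n, fwd (seq n) (D n)) ∈ seq (n + 1) ∧
      (bwd (insert (D n, fwd (seq n) (D n)) (seq n)) (D n), D n) ∈ seq (n + 1) := fun n =>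
    ⟨Set.mem_insert_of_mem _ (Set.mem_insert _ _), Set.mem_insert _ _⟩
  have hiso := IsIsometricRel.iUnion hmono.directed_le fun n => (hseq n).2
  obtain ⟨g, hg⟩ := hiso.exists_isometryEquiv
    (hD.mono <| by rintro _ ⟨n, rfl⟩; exact ⟨_, Set.mem_iUnion.2 ⟨n + 1, (hmem n).1⟩, rfl⟩)
    (hD.mono <| by rintro _ ⟨n, rfl⟩; exact ⟨_, Set.mem_iUnion.2 ⟨n + 1, (hmem n).2⟩, rfl⟩)
  exact ⟨g, fun x => hg _ (Set.mem_iUnion.2 ⟨0, x, rfl⟩)⟩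

namespace IsHomogeneous

theorem exists_isometryEquiv_apply_eq (hX : IsHomogeneous X) {ι : Type*} [Finite ι]
    (u v : ι → X) (h : ∀ i j, dist (v i) (v j) = dist (u i) (u j)) :
    ∃ g : X ≃ᵢ X, ∀ i, g (u i) = v i := by
  have hrs := Set.apply_rangeSplitting u
  obtain ⟨g, hg⟩ := hX (Set.range u) (Set.finite_range u) (v ∘ Set.rangeSplitting u)
    fun x y => by simp only [comp_apply, h, hrs]
  refine ⟨g, fun i => ?_⟩
  rw [hg ⟨u i, i, rfl⟩, comp_apply, ← dist_eq_zero, h, hrs, dist_self]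

theorem of_isometryEquiv (hX : IsHomogeneous X) (e : X ≃ᵢ Y) : IsHomogeneous Y := by
  intro F hF f hf
  have := hF.to_subtype
  obtain ⟨g, hg⟩ := hX.exists_isometryEquiv_apply_eq (fun x : F => e.symm x) (fun x => e.symm (f x))
    fun x y => by rw [e.symm.dist_eq, e.symm.dist_eq, hf]
  exact ⟨(e.symm.trans g).trans e, fun x => by simp [hg]⟩

end IsHomogeneous

end IsometricRel

section Katetov

variable {ι X : Type*} [PseudoMetricSpace X]

lemma metricTriple_dist (x y z : X) : MetricTriple (dist x y) (dist x z) (dist y z) :=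
  ⟨by simpa [Real.dist_eq] using dist_dist_dist_le_right x y z, dist_triangle_left _ _ _⟩

lemma MetricTriple.symm {a b c : ℝ} (h : MetricTriple a b c) : MetricTriple b a c :=
  ⟨abs_sub_comm a b ▸ h.1, add_comm a b ▸ h.2⟩

def katetovDist (p : ι → X) (t : ι → ℝ) : Option ι → Option ι → ℝ
  | some i, some j => dist (p i) (p j)
  | some i, none => t i
  | none, some j => t j
  | none, none => 0

abbrev katetovExtension (p : ι → X) (t : ι → ℝ)
    (ht : ∀ i j, MetricTriple (t i) (t j) (dist (p i) (p j))) : PseudoMetricSpace (Option ι) where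
  dist := katetovDist p t
  dist_self := by rintro (_ | i) <;> simp [katetovDist]
  dist_comm := by rintro (_ | i) (_ | j) <;> simp [katetovDist, dist_comm]
  dist_triangle := by
    have hle := fun i j => abs_le.1 (ht i j).1
    have hnonneg := fun i => by simpa using (ht i i).2
    rintro (_ | i) (_ | j) (_ | k) <;> simp only [katetovDist]
    · simp
    · simp
    · linarith [hnonneg j]
    · linarith [hle j k]
    · simp
    · exact (ht i k).2
    · linarith [hle i j]
    · exact dist_triangle _ _ _

end Katetov

theorem ZeroLimit.exists_separated {R : Set ℝ} (hR : ZeroLimit R) (ι : Type*) [Finite ι] {c : ℝ}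
    (hc : 0 < c) :
    ∃ β > 0, ∃ ρ : ι → ℝ, (∀ i, ρ i ∈ R ∧ β ≤ ρ i ∧ ρ i < c) ∧
      ∀ i j, i ≠ j → β ≤ |ρ i - ρ j| := by
  choose! pick hpick using hR
  let r (n : ℕ) : ℝ := Nat.rec (pick c) (fun _ x => pick (x / 2)) n
  have hr : ∀ n, r n ∈ R ∧ 0 < r n ∧ r n < c := by
    intro n
    induction n with
    | zero => exact hpick c hc
    | succ n ih =>
      obtain ⟨h₁, h₂, h₃⟩ := hpick (r n / 2) (by linarith [ih.2.1])
      exact ⟨h₁, h₂, by linarith [ih.2.2]⟩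
  have hhalf : ∀ n, 2 * r (n + 1) < r n := fun n => by
    linarith [(hpick (r n / 2) (by linarith [(hr n).2.1])).2.2]
  have hanti : StrictAnti r := strictAnti_nat_of_succ_lt fun n => by
    linarith [hhalf n, (hr (n + 1)).2.1]
  obtain ⟨N, ⟨e⟩⟩ := Finite.exists_equiv_fin ι
  refine ⟨r N, (hr N).2.1, fun i => r (e i),
    fun i => ⟨(hr _).1, (hanti (e i).2).le, (hr _).2.2⟩, fun i j hij => ?_⟩
  have hne : (e i : ℕ) ≠ e j := fun h => hij (e.injective (Fin.ext h))
  wlog hlt : (e i : ℕ) < e j generalizing i j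
  · rw [abs_sub_comm]
    exact this j i hij.symm hne.symm (by omega)
  have := hanti.antitone (Nat.succ_le_of_lt hlt)
  have := hhalf (e i)
  have := (hanti (e j).2).le
  rw [abs_of_pos (by linarith [(hr (e j)).2.1])]
  linarith

lemma nonneg_of_mem_distSet {X : Type*} [MetricSpace X] {r : ℝ} (hr : r ∈ distSet X) : 0 ≤ r := by
  obtain ⟨x, y, rfl⟩ := hr
  exact dist_nonneg

namespace IsUniversal

variable {M : Type} [MetricSpace M] [Nonempty M]

/-- The one-point extension, made a metric space by the separation quotient, embeds in `M`, and
homogeneity moves the copy of `p` back onto `p`. -/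
theorem exists_dist_eq (hM : IsUniversal M) {ι : Type} [Finite ι] (p : ι → M) (t : ι → ℝ)
    (htM : ∀ i, t i ∈ distSet M) (ht : ∀ i j, MetricTriple (t i) (t j) (dist (p i) (p j))) :
    ∃ q, ∀ i, dist q (p i) = t i := by
  let := katetovExtension p t ht
  have hdist : ∀ o o' : Option ι,
      dist (SeparationQuotient.mk o) (SeparationQuotient.mk o') = katetovDist p t o o' :=
    fun _ _ => SeparationQuotient.dist_mk _ _
  have : Finite (SeparationQuotient (Option ι)) := Quotient.finite _
  obtain ⟨e, he⟩ := hM.2 (SeparationQuotient (Option ι)) <| by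
    rintro _ ⟨x, y, rfl⟩
    obtain ⟨o, rfl⟩ := SeparationQuotient.surjective_mk x
    obtain ⟨o', rfl⟩ := SeparationQuotient.surjective_mk y
    rw [hdist]
    rcases o with _ | i <;> rcases o' with _ | j
    exacts [⟨Classical.arbitrary M, _, dist_self _⟩, htM j, htM i, ⟨p i, p j, rfl⟩]
  obtain ⟨g, hg⟩ := hM.1.exists_isometryEquiv_apply_eq (fun i => e (.mk (some i))) p
    fun i j => by rw [he, hdist]; rfl
  exact ⟨g (e (.mk none)), fun i => by rw [← hg i, g.dist_eq, he, hdist]; rfl⟩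

/-- Points are added in increasing order of `ρ`; the gaps between the `ρ i` absorb the defect
`β` of `w` as a copy of `z`, so that each new point is a Katětov extension. -/
theorem exists_isometric_dist_eq (hM : IsUniversal M) {ι : Type} [DecidableEq ι] (s : Finset ι)
    (z w : ι → M) (ρ : ι → ℝ) {β : ℝ} (hρ : ∀ i ∈ s, ρ i ∈ distSet M)
    (hρsep : ∀ i ∈ s, ∀ j ∈ s, i ≠ j → β ≤ |ρ i - ρ j|)
    (hzw : ∀ i ∈ s, ∀ j ∈ s, |dist (z i) (z j) - dist (w i) (w j)| ≤ β)
    (hz : ∀ i ∈ s, ∀ j ∈ s, i ≠ j → ρ i + ρ j + β ≤ dist (z i) (z j)) :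
    ∃ x : ι → M, (∀ i ∈ s, ∀ j ∈ s, dist (x i) (x j) = dist (z i) (z j)) ∧
      ∀ i ∈ s, dist (x i) (w i) = ρ i := by
  induction s using Finset.induction_on_max_value ρ with
  | empty => exact ⟨w, by simp, by simp⟩
  | insert a s ha hmax ih =>
    have mem := Finset.mem_insert_self a s
    have mem' : ∀ j ∈ s, j ∈ insert a s := fun j => Finset.mem_insert_of_mem
    have hja : ∀ j ∈ s, j ≠ a := fun j hj h => ha (h ▸ hj)
    obtain ⟨x, hxz, hxw⟩ := ih (fun i hi => hρ i (mem' i hi))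
      (fun i hi j hj => hρsep i (mem' i hi) j (mem' j hj))
      (fun i hi j hj => hzw i (mem' i hi) j (mem' j hj))
      (fun i hi j hj => hz i (mem' i hi) j (mem' j hj))
    have hmix : ∀ j ∈ s, MetricTriple (ρ a) (dist (z a) (z j)) (dist (w a) (x j)) := by
      intro j hj
      have hgap := hρsep a mem j (mem' j hj) (hja j hj).symm
      rw [abs_of_nonneg (by linarith [hmax j hj])] at hgap
      have h₁ := abs_le.1 (hzw a mem j (mem' j hj))
      have h₂ := abs_le.1 (abs_dist_sub_le (w a) (x j) (w j))
      have h₃ := dist_triangle (w a) (w j) (x j)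
      have h₄ := hz a mem j (mem' j hj) (hja j hj).symm
      rw [hxw j hj] at h₂
      rw [dist_comm (w j), hxw j hj] at h₃
      exact ⟨abs_le.2 ⟨by linarith [dist_nonneg (x := z a) (y := z j)], by linarith⟩,
        by linarith⟩
    obtain ⟨q, hq⟩ := hM.exists_dist_eq (ι := Option s) (fun o => o.elim (w a) fun j => x j)
      (fun o => o.elim (ρ a) fun j => dist (z a) (z j))
      (by rintro (_ | j); exacts [hρ a mem, ⟨_, _, rfl⟩])
      (by
        rintro (_ | ⟨j, hj⟩) (_ | ⟨k, hk⟩)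
        · simpa [MetricTriple] using nonneg_of_mem_distSet (hρ a mem)
        · exact hmix k hk
        · simpa [dist_comm] using (hmix j hj).symm
        · simpa [hxz j hj k hk] using metricTriple_dist (z a) (z j) (z k))
    refine ⟨update x a q, fun i hi j hj => ?_, fun i hi => ?_⟩
    · rcases Finset.mem_insert.1 hi with rfl | hi₀ <;> rcases Finset.mem_insert.1 hj with rfl | hj₀
      · simp
      · rw [update_self, update_of_ne (hja j hj₀)]
        exact hq (some ⟨j, hj₀⟩)
      · rw [update_self, update_of_ne (hja i hi₀), dist_comm, dist_comm (z i)]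
        exact hq (some ⟨i, hi₀⟩)
      · rw [update_of_ne (hja i hi₀), update_of_ne (hja j hj₀)]
        exact hxz i hi₀ j hj₀
    · rcases Finset.mem_insert.1 hi with rfl | hi₀
      · rw [update_self]
        exact hq none
      · rw [update_of_ne (hja i hi₀)]
        exact hxw i hi₀

section Completion

variable {ι : Type} [Finite ι] {a c : ι → Completion M}

/-- `x` is an exact copy of an approximation of `a`, built near `c`, and `y` is the image of an
approximation of `b` under an isometry of `M` carrying that approximation of `a` onto `x`. -/
theorem exists_approx_extension (hM : IsUniversal M) (hz : ZeroLimit (distSet M))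
    (ha : Injective a) (hac : ∀ i j, dist (a i) (a j) = dist (c i) (c j)) (b : Completion M)
    {η : ℝ} (hη : 0 < η) :
    ∃ (x : ι → M) (y : M), (∀ i, dist (x i : Completion M) (c i) ≤ η) ∧
      ∀ i, |dist y (x i) - dist b (a i)| ≤ η := by
  classical
  have := Fintype.ofFinite ι
  obtain ⟨μ, hμ, hμa⟩ := Finite.exists_pos_forall_le
    (f := fun p : {p : ι × ι // p.1 ≠ p.2} => dist (a p.1.1) (a p.1.2))
    fun p => dist_pos.2 (ha.ne p.2)
  obtain ⟨β, hβ, ρ, hρ, hρsep⟩ := hz.exists_separated ι (c := min (η / 2) (μ / 4)) (by positivity)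
  have hρc : ∀ i, ρ i < η / 2 ∧ ρ i < μ / 4 := fun i => lt_min_iff.1 (hρ i).2.2
  set θ := β / 8 with hθ
  have hnear : ∀ x : Completion M, ∃ u : M, dist x u < θ := fun x =>
    Completion.denseRange_coe.exists_dist_lt x (by positivity)
  choose za hza using fun i => hnear (a i)
  choose zc hzc using fun i => hnear (c i)
  obtain ⟨zb, hzb⟩ := hnear b
  have happrox : ∀ {x y : Completion M} {u v : M}, dist x u < θ → dist y v < θ →
      |dist u v - dist x y| ≤ 2 * θ := by
    intro x y u v hu hv
    have := dist_dist_dist_le (u : Completion M) v x y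
    rw [Completion.dist_eq, Real.dist_eq, dist_comm (u : Completion M),
      dist_comm (v : Completion M)] at this
    linarith
  obtain ⟨x, hxz, hxw⟩ := hM.exists_isometric_dist_eq Finset.univ za zc ρ (β := 4 * θ)
    (fun i _ => (hρ i).1) (fun i _ j _ hij => by linarith [hρsep i j hij])
    (fun i _ j _ => by
      have h₁ := abs_le.1 (happrox (hza i) (hza j))
      have h₂ := abs_le.1 (happrox (hzc i) (hzc j))
      rw [hac] at h₁
      exact abs_le.2 ⟨by linarith, by linarith⟩)
    (fun i _ j _ hij => by
      have hμij : μ ≤ dist (a i) (a j) := hμa ⟨(i, j), hij⟩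
      linarith [(abs_le.1 (happrox (hza i) (hza j))).1, hρc i, hρc j, (hρ i).2.1, (hρ j).2.1])
  obtain ⟨g, hg⟩ := hM.1.exists_isometryEquiv_apply_eq za x fun i j =>
    hxz i (Finset.mem_univ _) j (Finset.mem_univ _)
  refine ⟨x, g zb, fun i => ?_, fun i => ?_⟩
  · calc dist (x i : Completion M) (c i)
        ≤ dist (x i : Completion M) (zc i) + dist (zc i : Completion M) (c i) := dist_triangle _ _ _
      _ ≤ η := by
        rw [Completion.dist_eq, hxw i (Finset.mem_univ _), dist_comm]
        linarith [hρc i, (hρ i).2.1, hzc i]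
  · rw [← hg i, g.dist_eq]
    exact (happrox hzb (hza i)).trans (by linarith [hρc i, (hρ i).2.1])

/-- `q'` is realized in `M` at distance exactly `ε` from an approximation of `q`: realized
distances must lie in `distSet M`, and this one keeps the corrections summable. -/
theorem exists_refine (hM : IsUniversal M) (hz : ZeroLimit (distSet M)) (ha : Injective a)
    (hac : ∀ i j, dist (a i) (a j) = dist (c i) (c j)) {b : Completion M} {ε : ℝ}
    (hεM : ε ∈ distSet M) (hb : ∀ i, 4 * ε ≤ dist b (a i)) {q : Completion M}
    (hq : ∀ i, |dist q (c i) - dist b (a i)| ≤ ε / 2) {η : ℝ} (hη : 0 < η) (hηε : 6 * η ≤ ε) :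
    ∃ q' : M, dist (q' : Completion M) q ≤ ε + η ∧
      ∀ i, |dist (q' : Completion M) (c i) - dist b (a i)| ≤ 2 * η := by
  obtain ⟨x, y, hxc, hy⟩ := hM.exists_approx_extension hz ha hac b hη
  obtain ⟨zq, hzq⟩ := Completion.denseRange_coe.exists_dist_lt q hη
  have hmix : ∀ i, MetricTriple ε (dist y (x i)) (dist zq (x i)) := by
    intro i
    have h₁ := dist_dist_dist_le (zq : Completion M) (x i : Completion M) q (c i)
    rw [Real.dist_eq, Completion.dist_eq, dist_comm (zq : Completion M)] at h₁
    have h₂ := abs_le.1 h₁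
    have h₃ := abs_le.1 (hq i)
    have h₄ := abs_le.1 (hy i)
    have h₅ := hb i
    have h₆ := hxc i
    exact ⟨abs_le.2 ⟨by linarith, by linarith⟩, by linarith⟩
  obtain ⟨q', hq'⟩ := hM.exists_dist_eq (ι := Option ι) (fun o => o.elim zq x)
    (fun o => o.elim ε fun i => dist y (x i))
    (by rintro (_ | i); exacts [hεM, ⟨_, _, rfl⟩])
    (by
      rintro (_ | i) (_ | j)
      · simpa [MetricTriple] using nonneg_of_mem_distSet hεM
      · exact hmix j
      · simpa [dist_comm] using (hmix i).symm
      · exact metricTriple_dist _ _ _)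
  have hq'zq : dist q' zq = ε := hq' none
  have hq'x : ∀ i, dist q' (x i) = dist y (x i) := fun i => hq' (some i)
  refine ⟨q', ?_, fun i => ?_⟩
  · calc dist (q' : Completion M) q
        ≤ dist (q' : Completion M) zq + dist (zq : Completion M) q := dist_triangle _ _ _
      _ ≤ ε + η := by
        rw [Completion.dist_eq, hq'zq, dist_comm]
        exact add_le_add le_rfl hzq.le
  · have h₁ := dist_dist_dist_le_right (q' : Completion M) (c i) (x i)
    rw [Real.dist_eq, Completion.dist_eq, hq'x, dist_comm (c i)] at h₁
    have h₂ := abs_le.1 h₁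
    have h₃ := abs_le.1 (hy i)
    have h₄ := hxc i
    exact abs_le.2 ⟨by linarith, by linarith⟩

theorem exists_dist_eq_completion (hM : IsUniversal M) (hz : ZeroLimit (distSet M))
    (ha : Injective a) (hac : ∀ i j, dist (a i) (a j) = dist (c i) (c j)) (b : Completion M) :
    ∃ q, ∀ i, dist q (c i) = dist b (a i) := by
  by_cases hb : ∃ i, b = a i
  · obtain ⟨i, rfl⟩ := hb
    exact ⟨c i, fun j => (hac i j).symm⟩
  simp only [not_exists] at hb
  obtain ⟨v, hv, hvb⟩ := Finite.exists_pos_forall_le fun i => dist_pos.2 (hb i)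
  let P (ε : ℝ) (q : Completion M) : Prop := ε ∈ distSet M ∧ 0 < ε ∧ 4 * ε ≤ v ∧
    ∀ i, |dist q (c i) - dist b (a i)| ≤ ε / 2
  obtain ⟨ε₀, hε₀M, hε₀, hε₀v⟩ := hz (v / 4) (by positivity)
  obtain ⟨x₀, y₀, hx₀, hy₀⟩ := hM.exists_approx_extension hz ha hac b (η := ε₀ / 4) (by positivity)
  have h₀ : P ε₀ y₀ := by
    refine ⟨hε₀M, hε₀, by linarith, fun i => ?_⟩
    have h₁ := dist_dist_dist_le_right (y₀ : Completion M) (c i) (x₀ i)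
    rw [Real.dist_eq, Completion.dist_eq, dist_comm (c i)] at h₁
    have h₂ := abs_le.1 h₁
    have h₃ := abs_le.1 (hy₀ i)
    have h₄ := hx₀ i
    exact abs_le.2 ⟨by linarith, by linarith⟩
  have hstep : ∀ ε q, P ε q → ∃ ε' q', P ε' q' ∧ ε' ≤ ε / 2 ∧ dist q' q ≤ 2 * ε := by
    rintro ε q ⟨hεM, hε, hεv, hq⟩
    obtain ⟨ε', hε'M, hε', hε'ε⟩ := hz (ε / 4) (by positivity)
    have hη₁ := min_le_left (ε' / 4) (ε / 6)
    have hη₂ := min_le_right (ε' / 4) (ε / 6)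
    obtain ⟨q', hq'q, hq'⟩ := hM.exists_refine hz ha hac hεM (fun i => hεv.trans (hvb i)) hq
      (η := min (ε' / 4) (ε / 6)) (by positivity) (by linarith)
    exact ⟨ε', q', ⟨hε'M, hε', by linarith, fun i => (hq' i).trans (by linarith)⟩,
      by linarith, by linarith⟩
  obtain ⟨ε, q, x, hP, hx⟩ := exists_tendsto_of_forall_exists_half P h₀ hstep
  refine ⟨x, fun i => tendsto_nhds_unique (hx.dist tendsto_const_nhds) ?_⟩
  rw [tendsto_iff_dist_tendsto_zero]
  refine squeeze_zero (fun _ => dist_nonneg) (fun n => ?_)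
    (tendsto_const_nhds.div_atTop (tendsto_pow_atTop_atTop_of_one_lt one_lt_two) :
      Tendsto (fun n : ℕ => ε₀ / 2 ^ n) atTop (𝓝 0))
  rw [Real.dist_eq]
  linarith [(hP n).1.2.2.2 i, (hP n).2, (hP n).1.2.1]

theorem exists_insert_completion (hM : IsUniversal M) (hz : ZeroLimit (distSet M))
    (s : Set (Completion M × Completion M)) (hs : s.Finite) (hiso : IsIsometricRel s)
    (b : Completion M) : ∃ q, IsIsometricRel (insert (b, q) s) := by
  have := hs.to_subtype
  obtain ⟨q, hq⟩ := hM.exists_dist_eq_completion hz hiso.injective_fst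
    (c := fun p : s => p.1.2) (fun p p' => hiso _ p.2 _ p'.2) b
  exact ⟨q, hiso.insert fun p hp => (hq ⟨p, hp⟩).symm⟩

end Completion

end IsUniversal

theorem IsUniversal.isHomogeneous_completion {M : Type} [MetricSpace M]
    [TopologicalSpace.SeparableSpace M] (hM : IsUniversal M) (hz : ZeroLimit (distSet M)) :
    IsHomogeneous (Completion M) := by
  obtain ⟨_, ⟨x, -, -⟩, -⟩ := hz 1 one_pos
  have : Nonempty M := ⟨x⟩
  exact .of_exists_insert (hM.exists_insert_completion hz)

theorem IsHomogeneous.completion_of_not_zeroLimit {M : Type} [MetricSpace M]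
    (hM : IsHomogeneous M) (hz : ¬ ZeroLimit (distSet M)) : IsHomogeneous (Completion M) := by
  obtain ⟨r, hr, hle⟩ : ∃ r > 0, ∀ d ∈ distSet M, 0 < d → r ≤ d := by
    simpa [ZeroLimit] using hz
  have : DiscreteUniformity M :=
    ⟨Metric.uniformSpace_eq_bot.2 ⟨r, hr, fun x y hxy => hle _ ⟨x, y, rfl⟩ (dist_pos.2 hxy)⟩⟩
  obtain ⟨e, -⟩ := Completion.coe_isometry.exists_isometryEquiv_of_denseRange
    (Completion.denseRange_coe (α := M))
  exact hM.of_isometryEquiv e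

/-- The metric completion of a homogeneous separable metric space which embeds
every finite metric space with distances in its distance set is homogeneous. -/
theorem statement5 (M : Type) [MetricSpace M] [TopologicalSpace.SeparableSpace M]
    (hhom : IsHomogeneous M)
    (hemb : ∀ (F : Type) [MetricSpace F] [Finite F], distSet F ⊆ distSet M →
      ∃ f : F → M, ∀ a b : F, dist (f a) (f b) = dist a b) :
    IsHomogeneous (UniformSpace.Completion M) := by
  by_cases hz : ZeroLimit (distSet M)
  · exact IsUniversal.isHomogeneous_completion ⟨hhom, hemb⟩ hz
  · exact hhom.completion_of_not_zeroLimit hz
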